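/- arXiv:1808.08224 — 3 statements merged into one kernel-verified Lean document; each statement's English description precedes it below -/
import Mathlib

section
/- Suppose that f is a holomorphic self-map of the open unit disc D with f(0) = 0, and a, z are points of D with a ≠ 0 and z ≠ 0. Then sinh(½ρ(f(z), z)) ≤ (exp(ρ(a,z) + ρ(z,0)) / (4·sinh(½ρ(a,0)))) · sinh(½ρ(f(a), a)). -/
/-!
Write `f w = w q(w)` with `q = dslope f 0`; by the Schwarz lemma `q` maps the disc into the closed
disc. Then `sinh (ρ(f z, z)/2) ≤ |z| |q z - 1| / (1 - |z|²)` because `|f z| ≤ |z|`, and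
`sinh (ρ(f a, a)/2) ≥ sinh (ρ(a, 0)/2) |q a - 1|`. The Schwarz–Pick lemma for `q` and the
triangle inequality give `|q z - 1| ≤ e^{ρ(a,z)} |q a - 1|`, and
`4|z| / (1 - |z|²) = 2 sinh ρ(z, 0) ≤ e^{ρ(z,0)}` accounts for the remaining factor.
-/

open Complex Metric Set

/-- The hyperbolic metric on the open unit disc:
`ρ(u,v) = 2 · arsinh (|u − v| / √((1 − |u|²)(1 − |v|²)))`. -/
noncomputable def rho (u v : ℂ) : ℝ :=
  2 * Real.arsinh (‖u - v‖ /
    Real.sqrt ((1 - ‖u‖ ^ 2) * (1 - ‖v‖ ^ 2)))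

open ComplexConjugate

noncomputable def mobius (c w : ℂ) : ℂ := (w - c) / (1 - conj c * w)

theorem norm_one_sub_conj_mul_sq_sub_norm_sub_sq (c w : ℂ) :
    ‖1 - conj c * w‖ ^ 2 - ‖w - c‖ ^ 2 = (1 - ‖c‖ ^ 2) * (1 - ‖w‖ ^ 2) := by
  simp only [Complex.sq_norm, Complex.normSq_apply, Complex.sub_re, Complex.sub_im,
    Complex.mul_re, Complex.mul_im, Complex.one_re, Complex.one_im, Complex.conj_re,
    Complex.conj_im]
  ring

theorem one_sub_conj_mul_ne_zero {c w : ℂ} (hc : ‖c‖ ≤ 1) (hw : ‖w‖ < 1) :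
    1 - conj c * w ≠ 0 := by
  refine sub_ne_zero.2 fun h => ?_
  have : ‖conj c * w‖ < 1 := by
    rw [norm_mul, Complex.norm_conj]
    exact mul_lt_one_of_nonneg_of_lt_one_right hc (norm_nonneg w) hw
  simp [← h] at this

theorem norm_sub_lt_norm_one_sub_conj_mul {c w : ℂ} (hc : ‖c‖ < 1) (hw : ‖w‖ < 1) :
    ‖w - c‖ < ‖1 - conj c * w‖ := by
  have hc2 : ‖c‖ ^ 2 < 1 := pow_lt_one₀ (norm_nonneg c) hc two_ne_zero
  have hw2 : ‖w‖ ^ 2 < 1 := pow_lt_one₀ (norm_nonneg w) hw two_ne_zero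
  refine lt_of_pow_lt_pow_left₀ 2 (norm_nonneg _) ?_
  nlinarith [norm_one_sub_conj_mul_sq_sub_norm_sub_sq c w, mul_pos (sub_pos.2 hc2) (sub_pos.2 hw2)]

theorem norm_mobius_lt_one {c w : ℂ} (hc : ‖c‖ < 1) (hw : ‖w‖ < 1) : ‖mobius c w‖ < 1 := by
  rw [mobius, norm_div, div_lt_one ((norm_nonneg _).trans_lt
    (norm_sub_lt_norm_one_sub_conj_mul hc hw))]
  exact norm_sub_lt_norm_one_sub_conj_mul hc hw

theorem mobius_neg_mobius {c w : ℂ} (hc : ‖c‖ < 1) (hw : ‖w‖ < 1) :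
    mobius (-c) (mobius c w) = w := by
  have hden : 1 - conj c * w ≠ 0 := one_sub_conj_mul_ne_zero hc.le hw
  have hden' : 1 - conj (-c) * mobius c w ≠ 0 :=
    one_sub_conj_mul_ne_zero (by rw [norm_neg]; exact hc.le) (norm_mobius_lt_one hc hw)
  have hmob : mobius c w * (1 - conj c * w) = w - c := div_mul_cancel₀ _ hden
  rw [mobius, div_eq_iff hden', map_neg]
  linear_combination hmob

theorem DifferentiableOn.mobius {g : ℂ → ℂ} {s : Set ℂ} (hg : DifferentiableOn ℂ g s) {c : ℂ}
    (hc : ‖c‖ ≤ 1) (hgs : ∀ w ∈ s, ‖g w‖ < 1) :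
    DifferentiableOn ℂ (fun w => _root_.mobius c (g w)) s :=
  (hg.sub_const c).div ((differentiableOn_const 1).sub ((differentiableOn_const _).mul hg))
    fun w hw => one_sub_conj_mul_ne_zero hc (hgs w hw)

theorem norm_mobius_le_norm_mobius {q : ℂ → ℂ} (hq : DifferentiableOn ℂ q (ball 0 1))
    (hmaps : MapsTo q (ball 0 1) (ball 0 1)) {a z : ℂ} (ha : ‖a‖ < 1) (hz : ‖z‖ < 1) :
    ‖mobius (q a) (q z)‖ ≤ ‖mobius a z‖ := by
  have hq1 : ∀ w ∈ ball (0 : ℂ) 1, ‖q w‖ < 1 := fun w hw => mem_ball_zero_iff.1 (hmaps hw)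
  have hqa : ‖q a‖ < 1 := hq1 a (mem_ball_zero_iff.2 ha)
  have ha' : ‖-a‖ < 1 := by rwa [norm_neg]
  have hmob : MapsTo (mobius (-a)) (ball 0 1) (ball 0 1) := fun w hw =>
    mem_ball_zero_iff.2 (norm_mobius_lt_one ha' (mem_ball_zero_iff.1 hw))
  set F : ℂ → ℂ := fun w => mobius (q a) (q (mobius (-a) w))
  have hF : DifferentiableOn ℂ F (ball 0 1) :=
    ((hq.comp (differentiableOn_id.mobius ha'.le fun w hw => mem_ball_zero_iff.1 hw) hmob).mobius
      hqa.le) fun w hw => hq1 _ (hmob hw)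
  have hFmaps : MapsTo F (ball 0 1) (closedBall 0 1) := fun w hw =>
    ball_subset_closedBall (mem_ball_zero_iff.2 (norm_mobius_lt_one hqa (hq1 _ (hmob hw))))
  have hF0 : F 0 = 0 := by simp [F, mobius]
  simpa [F, mobius_neg_mobius ha hz] using
    Complex.norm_le_norm_of_mapsTo_ball hF hFmaps hF0 (norm_mobius_lt_one ha hz)

theorem schwarz_pick {q : ℂ → ℂ} (hq : DifferentiableOn ℂ q (ball 0 1))
    (hmaps : MapsTo q (ball 0 1) (closedBall 0 1)) {a z : ℂ} (ha : ‖a‖ < 1) (hz : ‖z‖ < 1) :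
    ‖q z - q a‖ * ‖1 - conj a * z‖ ≤ ‖z - a‖ * ‖1 - conj (q a) * q z‖ := by
  by_cases hopen : MapsTo q (ball 0 1) (ball 0 1)
  · have hqa : ‖q a‖ < 1 := mem_ball_zero_iff.1 (hopen (mem_ball_zero_iff.2 ha))
    have hqz : ‖q z‖ < 1 := mem_ball_zero_iff.1 (hopen (mem_ball_zero_iff.2 hz))
    have h := norm_mobius_le_norm_mobius hq hopen ha hz
    rwa [mobius, mobius, norm_div, norm_div, div_le_div_iff₀
      (norm_pos_iff.2 (one_sub_conj_mul_ne_zero hqa.le hqz))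
      (norm_pos_iff.2 (one_sub_conj_mul_ne_zero ha.le hz))] at h
  · -- a value of modulus one is an interior maximum of `‖q‖`
    obtain ⟨w, hw, hqw⟩ : ∃ w ∈ ball (0 : ℂ) 1, 1 ≤ ‖q w‖ := by
      simpa [MapsTo, mem_ball_zero_iff] using hopen
    have hmax : IsMaxOn (norm ∘ q) (ball 0 1) w := fun x hx =>
      (mem_closedBall_zero_iff.1 (hmaps hx)).trans hqw
    have hconst := Complex.eqOn_of_isPreconnected_of_isMaxOn_norm
      (convex_ball (0 : ℂ) 1).isPreconnected isOpen_ball hq hw hmax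
    rw [hconst (mem_ball_zero_iff.2 hz), hconst (mem_ball_zero_iff.2 ha), Function.const_apply,
      Function.const_apply, sub_self, norm_zero, zero_mul]
    positivity

theorem sinh_rho_half (u v : ℂ) :
    Real.sinh (rho u v / 2) = ‖u - v‖ / √((1 - ‖u‖ ^ 2) * (1 - ‖v‖ ^ 2)) := by
  rw [rho, mul_div_cancel_left₀ _ two_ne_zero, Real.sinh_arsinh]

theorem exp_rho {u v : ℂ} (hu : ‖u‖ < 1) (hv : ‖v‖ < 1) :
    Real.exp (rho u v) = (‖1 - conj u * v‖ + ‖u - v‖) / (‖1 - conj u * v‖ - ‖u - v‖) := by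
  rw [rho, two_mul, Real.exp_add, Real.exp_arsinh]
  have hprod : 0 < (1 - ‖u‖ ^ 2) * (1 - ‖v‖ ^ 2) :=
    mul_pos (by nlinarith [norm_nonneg u]) (by nlinarith [norm_nonneg v])
  have hn2 : ‖1 - conj u * v‖ ^ 2 = √((1 - ‖u‖ ^ 2) * (1 - ‖v‖ ^ 2)) ^ 2 + ‖u - v‖ ^ 2 := by
    rw [Real.sq_sqrt hprod.le, ← norm_one_sub_conj_mul_sq_sub_norm_sub_sq u v, norm_sub_rev v u]
    ring
  have hdn : ‖u - v‖ < ‖1 - conj u * v‖ := by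
    simpa only [norm_sub_rev v u] using norm_sub_lt_norm_one_sub_conj_mul hu hv
  set n := ‖1 - conj u * v‖
  set d := ‖u - v‖
  set s := √((1 - ‖u‖ ^ 2) * (1 - ‖v‖ ^ 2))
  have hs : 0 < s := Real.sqrt_pos.2 hprod
  have hroot : √(1 + (d / s) ^ 2) = n / s := by
    rw [show 1 + (d / s) ^ 2 = (n / s) ^ 2 by field_simp; linarith,
      Real.sqrt_sq (div_nonneg ((norm_nonneg _).trans hdn.le) hs.le)]
  rw [hroot, eq_div_iff (sub_pos.2 hdn).ne']
  field_simp
  linear_combination (n + d) * hn2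

theorem exp_rho_zero {z : ℂ} (hz : ‖z‖ < 1) :
    Real.exp (rho z 0) = (1 + ‖z‖) / (1 - ‖z‖) := by
  simpa using exp_rho hz (norm_zero.trans_lt one_pos)

theorem norm_div_one_sub_sq_le_exp_rho_zero_div_four {z : ℂ} (hz : ‖z‖ < 1) :
    ‖z‖ / (1 - ‖z‖ ^ 2) ≤ Real.exp (rho z 0) / 4 := by
  have hz0 := norm_nonneg z
  rw [exp_rho_zero hz, div_div, div_le_div_iff₀ (by nlinarith) (by linarith)]
  nlinarith [sq_nonneg (1 - ‖z‖), mul_nonneg hz0 (sub_nonneg.2 hz.le)]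

theorem sinh_rho_half_le {u v : ℂ} (huv : ‖u‖ ≤ ‖v‖) (hv : ‖v‖ < 1) :
    Real.sinh (rho u v / 2) ≤ ‖u - v‖ / (1 - ‖v‖ ^ 2) := by
  have hv2 : 0 ≤ 1 - ‖v‖ ^ 2 := by nlinarith [norm_nonneg v]
  rw [sinh_rho_half]
  gcongr
  · nlinarith [norm_nonneg v]
  · calc 1 - ‖v‖ ^ 2 = √((1 - ‖v‖ ^ 2) * (1 - ‖v‖ ^ 2)) := (Real.sqrt_mul_self hv2).symm
      _ ≤ √((1 - ‖u‖ ^ 2) * (1 - ‖v‖ ^ 2)) := by gcongr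

theorem div_sqrt_le_sinh_rho_half {u v : ℂ} (hu : ‖u‖ < 1) (hv : ‖v‖ < 1) :
    ‖u - v‖ / √(1 - ‖v‖ ^ 2) ≤ Real.sinh (rho u v / 2) := by
  have hu2 : 0 < 1 - ‖u‖ ^ 2 := by nlinarith [norm_nonneg u]
  have hv2 : 0 < 1 - ‖v‖ ^ 2 := by nlinarith [norm_nonneg v]
  rw [sinh_rho_half]
  gcongr
  exact mul_le_of_le_one_left hv2.le (by nlinarith [norm_nonneg u])

theorem norm_sub_one_le_exp_rho_mul {q : ℂ → ℂ} (hq : DifferentiableOn ℂ q (ball 0 1))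
    (hmaps : MapsTo q (ball 0 1) (closedBall 0 1)) {a z : ℂ} (ha : ‖a‖ < 1) (hz : ‖z‖ < 1) :
    ‖q z - 1‖ ≤ Real.exp (rho a z) * ‖q a - 1‖ := by
  have hqz : ‖q z‖ ≤ 1 := mem_closedBall_zero_iff.1 (hmaps (mem_ball_zero_iff.2 hz))
  have hdn : ‖z - a‖ < ‖1 - conj a * z‖ := norm_sub_lt_norm_one_sub_conj_mul ha hz
  have hden : ‖1 - conj (q a) * q z‖ ≤ ‖q z - 1‖ + ‖q a - 1‖ :=
    calc ‖1 - conj (q a) * q z‖ = ‖(1 - q z) + q z * conj (1 - q a)‖ := by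
          rw [map_sub, map_one]; ring_nf
      _ ≤ ‖1 - q z‖ + ‖q z‖ * ‖1 - q a‖ := by
          grw [norm_add_le, norm_mul, Complex.norm_conj]
      _ ≤ ‖q z - 1‖ + 1 * ‖q a - 1‖ := by
          rw [norm_sub_rev 1 (q z), norm_sub_rev 1 (q a)]; gcongr
      _ = ‖q z - 1‖ + ‖q a - 1‖ := by rw [one_mul]
  have htri : ‖q z - 1‖ ≤ ‖q z - q a‖ + ‖q a - 1‖ := norm_sub_le_norm_sub_add_norm_sub _ _ _
  rw [exp_rho ha hz, norm_sub_rev a z, div_mul_eq_mul_div, le_div_iff₀ (sub_pos.2 hdn)]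
  nlinarith [schwarz_pick hq hmaps ha hz,
    mul_le_mul_of_nonneg_left htri (norm_nonneg (1 - conj a * z)),
    mul_le_mul_of_nonneg_left hden (norm_nonneg (z - a))]

theorem sub_self_eq_mul_dslope_sub_one {f : ℂ → ℂ} (hf0 : f 0 = 0) (w : ℂ) :
    f w - w = w * (dslope f 0 w - 1) := by
  have h := sub_smul_dslope f 0 w
  rw [sub_zero, hf0, sub_zero, smul_eq_mul] at h
  rw [mul_sub_one, h]

theorem mapsTo_dslope_zero_closedBall {f : ℂ → ℂ} (hf : DifferentiableOn ℂ f (ball 0 1))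
    (hmaps : MapsTo f (ball 0 1) (ball 0 1)) (hf0 : f 0 = 0) :
    MapsTo (dslope f 0) (ball 0 1) (closedBall 0 1) := fun w hw => by
  simpa using Complex.norm_dslope_le_div_of_mapsTo_ball hf
    (by rw [hf0]; exact hmaps.mono_right ball_subset_closedBall) hw

theorem one_point_sinh_inequality_origin_general (f : ℂ → ℂ)
    (hf : DifferentiableOn ℂ f (ball (0:ℂ) 1))
    (hmaps : MapsTo f (ball (0:ℂ) 1) (ball (0:ℂ) 1))
    (hfix : f 0 = 0)
    (a z : ℂ) (ha : a ∈ ball (0:ℂ) 1) (hz : z ∈ ball (0:ℂ) 1)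
    (ha0 : a ≠ 0) :
    Real.sinh (rho (f z) z / 2) ≤
      (Real.exp (rho a z + rho z 0) / (4 * Real.sinh (rho a 0 / 2))) *
        Real.sinh (rho (f a) a / 2) := by
  have hfa : ‖f a‖ < 1 := mem_ball_zero_iff.1 (hmaps ha)
  rw [mem_ball_zero_iff] at ha hz
  have hq : DifferentiableOn ℂ (dslope f 0) (ball 0 1) :=
    (differentiableOn_dslope (ball_mem_nhds 0 one_pos)).2 hf
  have hqmaps := mapsTo_dslope_zero_closedBall hf hmaps hfix
  have hfz : ‖f z‖ ≤ ‖z‖ :=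
    Complex.norm_le_norm_of_mapsTo_ball hf (hmaps.mono_right ball_subset_closedBall) hfix hz
  have hsinh : Real.sinh (rho a 0 / 2) = ‖a‖ / √(1 - ‖a‖ ^ 2) := by simp [sinh_rho_half]
  have hsinh_pos : 0 < Real.sinh (rho a 0 / 2) := by
    rw [hsinh]
    exact div_pos (norm_pos_iff.2 ha0) (Real.sqrt_pos.2 (by nlinarith [norm_nonneg a]))
  calc Real.sinh (rho (f z) z / 2)
      ≤ ‖f z - z‖ / (1 - ‖z‖ ^ 2) := sinh_rho_half_le hfz hz
    _ = ‖z‖ / (1 - ‖z‖ ^ 2) * ‖dslope f 0 z - 1‖ := by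
        rw [sub_self_eq_mul_dslope_sub_one hfix z, norm_mul]; ring
    _ ≤ Real.exp (rho z 0) / 4 * (Real.exp (rho a z) * ‖dslope f 0 a - 1‖) :=
        mul_le_mul (norm_div_one_sub_sq_le_exp_rho_zero_div_four hz)
          (norm_sub_one_le_exp_rho_mul hq hqmaps ha hz) (norm_nonneg _) (by positivity)
    _ = Real.exp (rho a z + rho z 0) / (4 * Real.sinh (rho a 0 / 2)) *
          (Real.sinh (rho a 0 / 2) * ‖dslope f 0 a - 1‖) := by
        rw [Real.exp_add]; field_simp
    _ = Real.exp (rho a z + rho z 0) / (4 * Real.sinh (rho a 0 / 2)) *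
          (‖f a - a‖ / √(1 - ‖a‖ ^ 2)) := by
        rw [hsinh, sub_self_eq_mul_dslope_sub_one hfix a, norm_mul]; ring
    _ ≤ _ := mul_le_mul_of_nonneg_left (div_sqrt_le_sinh_rho_half hfa ha)
        (div_nonneg (Real.exp_pos _).le (mul_pos four_pos hsinh_pos).le)

/-- One-point inequality, in terms of `sinh`, for a holomorphic self-map of the
disc fixing the origin. -/
theorem one_point_sinh_inequality_origin (f : ℂ → ℂ)
    (hf : DifferentiableOn ℂ f (ball (0:ℂ) 1))
    (hmaps : MapsTo f (ball (0:ℂ) 1) (ball (0:ℂ) 1))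
    (hfix : f 0 = 0)
    (a z : ℂ) (ha : a ∈ ball (0:ℂ) 1) (hz : z ∈ ball (0:ℂ) 1)
    (ha0 : a ≠ 0) (hz0 : z ≠ 0) :
    Real.sinh (rho (f z) z / 2) ≤
      (Real.exp (rho a z + rho z 0) / (4 * Real.sinh (rho a 0 / 2))) *
        Real.sinh (rho (f a) a / 2) :=
  one_point_sinh_inequality_origin_general f hf hmaps hfix a z ha hz ha0
end

section
/- Let h be a hyperbolic conformal automorphism of the open unit disc D (a conformal automorphism of D that is a hyperbolic Möbius transformation), and let c be a point lying on the axis of h (the hyperbolic geodesic of D joining the two fixed points of h on the unit circle). Then for every w in D, ρ(w, h(w)) ≤ exp(ρ(w,c)) · ρ(c, h(c)). -/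
/-!
Write `h z = (α z + β) / (conj β z + conj α)`, `a = Re α` and `σ = √(a² - 1)`. Then
`ρ(z, h z) = 2 arsinh (|Q z| / (1 - |z|²))` for the quadratic `Q` whose zeros are the fixed
points of `h`, and `|Q z|² = σ² (1 - |z|²)² + E(z)²` with `E` real. So the displacement is at
least `2 arsinh σ`, with equality exactly on the axis `E = 0`, and a minimizer `c` lies on it.
Polarizing `Q` at such a `c` gives `|Q w| |Q c| ≤ σ² ((1 - |c|²)(1 - |w|²) + 2 |w - c|²)`, that is
`|Q w| / (1 - |w|²) ≤ σ cosh ρ(w, c)`. Finally `arsinh (σ cosh d) ≤ e^d arsinh σ`, because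
`x sinh τ ≤ sinh (x τ)` for `x ≥ 1`.
-/

open Complex Metric Set

open ComplexConjugate

namespace Real

lemma mul_sinh_le_sinh_mul {x τ : ℝ} (hx : 1 ≤ x) (hτ : 0 ≤ τ) :
    x * sinh τ ≤ sinh (x * τ) := by
  have hmono : MonotoneOn (fun t => sinh (x * t) - x * sinh t) (Ici 0) := by
    refine monotoneOn_of_deriv_nonneg (convex_Ici 0) (by fun_prop) (by fun_prop) fun t ht => ?_
    have hderiv : HasDerivAt (fun t => sinh (x * t) - x * sinh t)
        (cosh (x * t) * (x * 1) - x * cosh t) t :=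
      ((hasDerivAt_id' t).const_mul x).sinh.sub ((hasDerivAt_sinh t).const_mul x)
    have ht : 0 < t := by simpa using ht
    have hcosh : cosh t ≤ cosh (x * t) := by
      rw [cosh_le_cosh, abs_of_pos ht, abs_of_pos (by positivity)]
      nlinarith
    rw [hderiv.deriv]
    nlinarith
  simpa using hmono self_mem_Ici hτ hτ

lemma arsinh_cosh_mul_le_exp_mul_arsinh {d s : ℝ} (hd : 0 ≤ d) (hs : 0 ≤ s) :
    arsinh (cosh d * s) ≤ exp d * arsinh s := by
  have hcosh : cosh d ≤ exp d := by
    rw [cosh_eq]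
    linarith [exp_le_exp.mpr (neg_le_self hd)]
  rw [← sinh_le_sinh, sinh_arsinh]
  calc cosh d * s ≤ exp d * sinh (arsinh s) := by
        rw [sinh_arsinh]
        exact mul_le_mul_of_nonneg_right hcosh hs
    _ ≤ sinh (exp d * arsinh s) :=
        mul_sinh_le_sinh_mul (one_le_exp hd) (arsinh_nonneg_iff.mpr hs)

end Real

lemma one_sub_sq_norm_pos {z : ℂ} (hz : ‖z‖ < 1) : 0 < 1 - ‖z‖ ^ 2 := by
  nlinarith [norm_nonneg z]

lemma rho_nonneg (u v : ℂ) : 0 ≤ rho u v :=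
  mul_nonneg zero_le_two (Real.arsinh_nonneg_iff.mpr (by positivity))

lemma cosh_rho {u v : ℂ} (hu : ‖u‖ < 1) (hv : ‖v‖ < 1) :
    Real.cosh (rho u v) = 1 + 2 * ‖u - v‖ ^ 2 / ((1 - ‖u‖ ^ 2) * (1 - ‖v‖ ^ 2)) := by
  have hpos := mul_pos (one_sub_sq_norm_pos hu) (one_sub_sq_norm_pos hv)
  rw [rho, Real.cosh_two_mul, Real.cosh_sq, Real.sinh_arsinh, div_pow, Real.sq_sqrt hpos.le]
  ring

lemma norm_conj_mul_add_conj_sq_sub_norm_sq (α β z : ℂ) :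
    ‖conj β * z + conj α‖ ^ 2 - ‖α * z + β‖ ^ 2 = (‖α‖ ^ 2 - ‖β‖ ^ 2) * (1 - ‖z‖ ^ 2) := by
  simp only [Complex.sq_norm, normSq_apply, mul_re, mul_im, add_re, add_im, conj_re, conj_im]
  ring

lemma norm_one_sub_conj_mul_sq (c w : ℂ) :
    ‖1 - conj c * w‖ ^ 2 = (1 - ‖c‖ ^ 2) * (1 - ‖w‖ ^ 2) + ‖w - c‖ ^ 2 := by
  simp only [Complex.sq_norm, normSq_apply, mul_re, mul_im, sub_re, sub_im, conj_re, conj_im,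
    one_re, one_im]
  ring

/-- The numerator of `z - h z` over the denominator `conj β * z + conj α` of `h`. -/
def fixedPointPoly (α β z : ℂ) : ℂ := conj β * z ^ 2 + (conj α - α) * z - β

/-- The displacement of `h` is minimal exactly where `axisDefect α β` vanishes
(`norm_fixedPointPoly_sq`): its zero set in the disc is the axis of `h`. -/
noncomputable def axisDefect (α β z : ℂ) : ℝ := 2 * (conj β * z).im - α.im * (1 + ‖z‖ ^ 2)

section Mobius

variable {α β : ℂ}

lemma rho_self_mobius (hdet : ‖α‖ ^ 2 - ‖β‖ ^ 2 = 1) {z : ℂ} (hz : ‖z‖ < 1) :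
    rho z ((α * z + β) / (conj β * z + conj α)) =
      2 * Real.arsinh (‖fixedPointPoly α β z‖ / (1 - ‖z‖ ^ 2)) := by
  set D := conj β * z + conj α
  have hz' := one_sub_sq_norm_pos hz
  have hD : ‖D‖ ^ 2 - ‖α * z + β‖ ^ 2 = 1 - ‖z‖ ^ 2 := by
    rw [norm_conj_mul_add_conj_sq_sub_norm_sq, hdet, one_mul]
  have hD0 : 0 < ‖D‖ := by nlinarith [norm_nonneg (α * z + β), norm_nonneg D]
  have hsub : z - (α * z + β) / D = fixedPointPoly α β z / D := by
    rw [fixedPointPoly, eq_div_iff (norm_pos_iff.mp hD0), sub_mul,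
      div_mul_cancel₀ _ (norm_pos_iff.mp hD0)]
    ring
  have hsqrt : √((1 - ‖z‖ ^ 2) * (1 - ‖(α * z + β) / D‖ ^ 2)) = (1 - ‖z‖ ^ 2) / ‖D‖ := by
    rw [norm_div, div_pow, one_sub_div (by positivity), hD, ← mul_div_assoc, ← sq,
      ← div_pow, Real.sqrt_sq (by positivity)]
  rw [rho, hsub, hsqrt, norm_div]
  field_simp

lemma norm_fixedPointPoly_sq (hdet : ‖α‖ ^ 2 - ‖β‖ ^ 2 = 1) (z : ℂ) :
    ‖fixedPointPoly α β z‖ ^ 2 = (α.re ^ 2 - 1) * (1 - ‖z‖ ^ 2) ^ 2 + axisDefect α β z ^ 2 := by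
  rw [fixedPointPoly, axisDefect]
  simp only [Complex.sq_norm, normSq_apply] at hdet ⊢
  simp only [mul_re, mul_im, add_re, add_im, sub_re, sub_im, conj_re, conj_im, pow_two]
  linear_combination -(1 - (z.re * z.re + z.im * z.im)) ^ 2 * hdet

lemma norm_fixedPointPoly_of_axisDefect_eq_zero (hdet : ‖α‖ ^ 2 - ‖β‖ ^ 2 = 1)
    (ha : 1 ≤ α.re ^ 2) {z : ℂ} (hz : ‖z‖ ≤ 1) (hE : axisDefect α β z = 0) :
    ‖fixedPointPoly α β z‖ = √(α.re ^ 2 - 1) * (1 - ‖z‖ ^ 2) := by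
  have : 0 ≤ 1 - ‖z‖ ^ 2 := by nlinarith [norm_nonneg z]
  rw [← sq_eq_sq₀ (norm_nonneg _) (by positivity), norm_fixedPointPoly_sq hdet, hE, mul_pow,
    Real.sq_sqrt (by linarith)]
  ring

lemma axisDefect_eq_zero_of_norm_fixedPointPoly_le (hdet : ‖α‖ ^ 2 - ‖β‖ ^ 2 = 1)
    (ha : 1 ≤ α.re ^ 2) {z : ℂ} (h : ‖fixedPointPoly α β z‖ ≤ √(α.re ^ 2 - 1) * (1 - ‖z‖ ^ 2)) :
    axisDefect α β z = 0 := by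
  have hsq := pow_le_pow_left₀ (norm_nonneg _) h 2
  rw [norm_fixedPointPoly_sq hdet, mul_pow, Real.sq_sqrt (by linarith)] at hsq
  exact pow_eq_zero_iff two_ne_zero |>.mp (le_antisymm (by linarith) (sq_nonneg _))

lemma exists_norm_lt_one_axisDefect_eq_zero (hdet : ‖α‖ ^ 2 - ‖β‖ ^ 2 = 1) (ha : 1 < α.re ^ 2) :
    ∃ z : ℂ, ‖z‖ < 1 ∧ axisDefect α β z = 0 := by
  set σ := √(α.re ^ 2 - 1)
  set r := ‖β‖
  have hσ : 0 < σ := Real.sqrt_pos.mpr (by linarith)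
  have hr : r ^ 2 = α.im ^ 2 + σ ^ 2 := by
    rw [Real.sq_sqrt (by linarith)]
    linarith [Complex.sq_norm_sub_sq_re α]
  have hr0 : 0 < r := by nlinarith [norm_nonneg β]
  have him : |α.im| < r + σ := by nlinarith [sq_abs α.im, abs_nonneg α.im]
  -- `I t β` is on the axis iff `α.im (1 + t² r²) = 2 t r²`; this is the root with `|t| r < 1`.
  obtain ⟨t, ht⟩ : ∃ t : ℝ, α.im = t * r * (r + σ) :=
    ⟨α.im / (r * (r + σ)), by field_simp⟩
  have hrσ : 0 < r + σ := add_pos hr0 hσ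
  have hscale : |t| * r < 1 := by
    rw [ht, abs_mul, abs_of_pos hrσ, abs_mul, abs_of_pos hr0] at him
    exact (mul_lt_iff_lt_one_left hrσ).mp him
  have hrσ' : r - σ = t ^ 2 * r ^ 2 * (r + σ) := by
    refine mul_right_cancel₀ hrσ.ne' ?_
    linear_combination hr + (α.im + t * r * (r + σ)) * ht
  refine ⟨I * t * β, ?_, ?_⟩
  · rwa [norm_mul, norm_mul, norm_I, norm_real, Real.norm_eq_abs, one_mul]
  · have hββ : conj β * (I * t * β) = I * ((t * r ^ 2 : ℝ) : ℂ) := by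
      rw [mul_left_comm, conj_mul']
      push_cast
      ring
    rw [axisDefect, hββ, norm_mul, norm_mul, norm_I, norm_real, Real.norm_eq_abs, one_mul, mul_pow,
      sq_abs, mul_im, I_re, I_im, ofReal_re, ofReal_im]
    linear_combination -(1 + t ^ 2 * r ^ 2) * ht + t * r * hrσ'

lemma norm_fixedPointPoly_mul_le (hdet : ‖α‖ ^ 2 - ‖β‖ ^ 2 = 1) {c : ℂ}
    (hE : axisDefect α β c = 0) (w : ℂ) :
    ‖fixedPointPoly α β w‖ * ‖fixedPointPoly α β c‖ ≤
      (α.re ^ 2 - 1) * ((1 - ‖c‖ ^ 2) * (1 - ‖w‖ ^ 2) + 2 * ‖w - c‖ ^ 2) := by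
  have hγ : conj α - α = -2 * I * α.im := by linear_combination -(RCLike.sub_conj α)
  have hββ : conj β * β = ((α.im ^ 2 + (α.re ^ 2 - 1) : ℝ) : ℂ) := by
    rw [conj_mul', ← ofReal_pow]
    congr 1
    linarith [Complex.sq_norm_sub_sq_re α]
  have hEc : conj β * c - β * conj c = I * α.im * (1 + c * conj c) := by
    have hE' : (2 * (conj β * c).im : ℂ) = α.im * (1 + ‖c‖ ^ 2) := by
      exact_mod_cast sub_eq_zero.mp hE
    have h := RCLike.sub_conj (conj β * c)
    rw [map_mul, conj_conj] at h
    rw [mul_conj', h]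
    linear_combination I * hE'
  have hF : ‖I * α.im * c + β‖ ^ 2 = α.re ^ 2 - 1 := by
    rw [axisDefect] at hE
    simp only [Complex.sq_norm, normSq_apply] at hE hdet ⊢
    simp only [mul_re, mul_im, add_re, add_im, conj_re, conj_im, I_re, I_im, ofReal_re,
      ofReal_im] at hE ⊢
    linear_combination -hdet - α.im * hE
  -- Polarization of the quadratic; on the axis its bilinear part factors through `1 - conj c * w`.
  have hpolar : fixedPointPoly α β w * fixedPointPoly α β c =
      (-(I * α.im * c + β) * (1 - conj c * w)) ^ 2 - ((α.re ^ 2 - 1 : ℝ) : ℂ) * (w - c) ^ 2 := by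
    rw [fixedPointPoly, fixedPointPoly, hγ]
    push_cast at hββ ⊢
    linear_combination (w * (conj β * w * c - I * α.im * (w + c) - β
      - (I * α.im * c + β) * (1 - conj c * w))) * hEc - (w - c) ^ 2 * hββ
      - (α.im : ℂ) ^ 2 * (w - c) ^ 2 * I_sq
  have ha : 0 ≤ α.re ^ 2 - 1 := hF ▸ sq_nonneg _
  rw [← norm_mul, hpolar]
  refine (norm_sub_le _ _).trans_eq ?_
  rw [norm_pow, norm_mul, norm_neg, mul_pow, hF, norm_one_sub_conj_mul_sq, norm_mul, norm_real,
    norm_pow, Real.norm_of_nonneg ha]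
  ring

lemma norm_fixedPointPoly_div_le_cosh_rho_mul (hdet : ‖α‖ ^ 2 - ‖β‖ ^ 2 = 1)
    (ha : 1 < α.re ^ 2) {c w : ℂ} (hc : ‖c‖ < 1) (hE : axisDefect α β c = 0) (hw : ‖w‖ < 1) :
    ‖fixedPointPoly α β w‖ / (1 - ‖w‖ ^ 2) ≤ Real.cosh (rho w c) * √(α.re ^ 2 - 1) := by
  set σ := √(α.re ^ 2 - 1)
  have hσ : 0 < σ := Real.sqrt_pos.mpr (by linarith)
  have hc' := one_sub_sq_norm_pos hc
  have hw' := one_sub_sq_norm_pos hw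
  have hcancel : ‖fixedPointPoly α β w‖ * (1 - ‖c‖ ^ 2) ≤
      σ * ((1 - ‖c‖ ^ 2) * (1 - ‖w‖ ^ 2) + 2 * ‖w - c‖ ^ 2) := by
    refine le_of_mul_le_mul_left ?_ hσ
    calc σ * (‖fixedPointPoly α β w‖ * (1 - ‖c‖ ^ 2))
        = ‖fixedPointPoly α β w‖ * ‖fixedPointPoly α β c‖ := by
          rw [norm_fixedPointPoly_of_axisDefect_eq_zero hdet ha.le hc.le hE]; ring
      _ ≤ (α.re ^ 2 - 1) * ((1 - ‖c‖ ^ 2) * (1 - ‖w‖ ^ 2) + 2 * ‖w - c‖ ^ 2) :=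
          norm_fixedPointPoly_mul_le hdet hE w
      _ = σ * (σ * ((1 - ‖c‖ ^ 2) * (1 - ‖w‖ ^ 2) + 2 * ‖w - c‖ ^ 2)) := by
          rw [← mul_assoc, ← sq, Real.sq_sqrt (by linarith)]
  rw [cosh_rho hw hc, div_le_iff₀ hw']
  calc ‖fixedPointPoly α β w‖
      ≤ σ * ((1 - ‖c‖ ^ 2) * (1 - ‖w‖ ^ 2) + 2 * ‖w - c‖ ^ 2) / (1 - ‖c‖ ^ 2) :=
        (le_div_iff₀ hc').mpr hcancel
    _ = (1 + 2 * ‖w - c‖ ^ 2 / ((1 - ‖w‖ ^ 2) * (1 - ‖c‖ ^ 2))) * σ * (1 - ‖w‖ ^ 2) := by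
        field_simp

end Mobius

/-- Automorphisms of the disc are written `h w = (αw + β)/(β̄w + ᾱ)` with `|α|² − |β|² = 1`,
hyperbolic exactly when `|Re α| > 1`; the axis of `h` is described as the set of minimizers of
the displacement `w ↦ ρ(w, h w)`. -/
theorem displacement_hyperbolic_automorphism (α β : ℂ) (h : ℂ → ℂ)
    (hform : ∀ w ∈ ball (0:ℂ) 1, h w = (α * w + β) / ((starRingEnd ℂ) β * w + (starRingEnd ℂ) α))
    (hdet : ‖α‖ ^ 2 - ‖β‖ ^ 2 = 1)
    (hhyperbolic : 1 < |α.re|)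
    (c : ℂ) (hc : c ∈ ball (0:ℂ) 1)
    (haxis : ∀ w ∈ ball (0:ℂ) 1, rho c (h c) ≤ rho w (h w))
    (w : ℂ) (hw : w ∈ ball (0:ℂ) 1) :
    rho w (h w) ≤ Real.exp (rho w c) * rho c (h c) := by
  have ha : 1 < α.re ^ 2 := by simpa using one_lt_sq_iff_one_lt_abs _ |>.mpr hhyperbolic
  rw [mem_ball_zero_iff] at hc hw
  have hρ : ∀ z, ‖z‖ < 1 →
      rho z (h z) = 2 * Real.arsinh (‖fixedPointPoly α β z‖ / (1 - ‖z‖ ^ 2)) := fun z hz => by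
    rw [hform z (mem_ball_zero_iff.mpr hz), rho_self_mobius hdet hz]
  have hρ_axis : ∀ z, ‖z‖ < 1 → axisDefect α β z = 0 →
      rho z (h z) = 2 * Real.arsinh √(α.re ^ 2 - 1) := fun z hz hE => by
    rw [hρ z hz, norm_fixedPointPoly_of_axisDefect_eq_zero hdet ha.le hz.le hE,
      mul_div_cancel_right₀ _ (one_sub_sq_norm_pos hz).ne']
  obtain ⟨c₀, hc₀, hE₀⟩ := exists_norm_lt_one_axisDefect_eq_zero hdet ha
  have hEc : axisDefect α β c = 0 := by
    have hmin := haxis c₀ (mem_ball_zero_iff.mpr hc₀)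
    rw [hρ c hc, hρ_axis c₀ hc₀ hE₀, mul_le_mul_iff_right₀ two_pos, Real.arsinh_le_arsinh,
      div_le_iff₀ (one_sub_sq_norm_pos hc)] at hmin
    exact axisDefect_eq_zero_of_norm_fixedPointPoly_le hdet ha.le hmin
  rw [hρ w hw, hρ_axis c hc hEc]
  calc 2 * Real.arsinh (‖fixedPointPoly α β w‖ / (1 - ‖w‖ ^ 2))
      ≤ 2 * Real.arsinh (Real.cosh (rho w c) * √(α.re ^ 2 - 1)) := by
        gcongr
        exact norm_fixedPointPoly_div_le_cosh_rho_mul hdet ha hc hEc hw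
    _ ≤ 2 * (Real.exp (rho w c) * Real.arsinh √(α.re ^ 2 - 1)) := by
        gcongr
        exact Real.arsinh_cosh_mul_le_exp_mul_arsinh (rho_nonneg w c) (Real.sqrt_nonneg _)
    _ = Real.exp (rho w c) * (2 * Real.arsinh √(α.re ^ 2 - 1)) := by ring
end

section
/- The map f(w) = Re(w) (the real part of w) is a contraction of the open unit disc D with respect to the hyperbolic metric: for all z, w in D, ρ(Re z, Re w) ≤ ρ(z, w). Moreover, for any two distinct real numbers a, b in D one has ρ(f(a), a) = ρ(f(b), b) = 0, while ρ(f(z), z) > 0 for every non-real z in D; hence the two-point inequality ρ(f(z),z) ≤ K·(ρ(f(a),a) + ρ(f(b),b)) fails for this contraction. -/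
/-!
Taking real parts shortens Euclidean distances and moves points towards the origin, so it
decreases the numerator and increases the denominator in the formula for `ρ`. Real points are
fixed while non-real ones move, so at real `a, b` the right-hand side of the two-point
inequality vanishes whereas its left-hand side is positive at `z = i/2`.
-/

open Complex Metric Set

lemma rho_self (u : ℂ) : rho u u = 0 := by
  simp [rho]

lemma rho_pos {u v : ℂ} (hu : u ∈ ball (0 : ℂ) 1) (hv : v ∈ ball (0 : ℂ) 1) (huv : u ≠ v) :
    0 < rho u v := by
  rw [mem_ball_zero_iff] at hu hv
  have hu' : 0 < 1 - ‖u‖ ^ 2 := by nlinarith [norm_nonneg u]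
  have hv' : 0 < 1 - ‖v‖ ^ 2 := by nlinarith [norm_nonneg v]
  have hdist : 0 < ‖u - v‖ := norm_pos_iff.mpr (sub_ne_zero.mpr huv)
  unfold rho
  have := Real.arsinh_pos_iff.mpr (div_pos hdist (Real.sqrt_pos.mpr (mul_pos hu' hv')))
  positivity

lemma rho_le_rho {u v u' v' : ℂ} (hu : u ∈ ball (0 : ℂ) 1) (hv : v ∈ ball (0 : ℂ) 1)
    (hu' : ‖u'‖ ≤ ‖u‖) (hv' : ‖v'‖ ≤ ‖v‖) (h : ‖u' - v'‖ ≤ ‖u - v‖) :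
    rho u' v' ≤ rho u v := by
  rw [mem_ball_zero_iff] at hu hv
  have hu₀ : 0 < 1 - ‖u‖ ^ 2 := by nlinarith [norm_nonneg u]
  have hv₀ : 0 < 1 - ‖v‖ ^ 2 := by nlinarith [norm_nonneg v]
  have hu'₀ : 0 ≤ 1 - ‖u'‖ ^ 2 := by nlinarith [norm_nonneg u']
  unfold rho
  gcongr

lemma norm_ofReal_re_le (z : ℂ) : ‖(z.re : ℂ)‖ ≤ ‖z‖ := by
  simpa only [norm_real, Real.norm_eq_abs] using abs_re_le_norm z

lemma ofReal_re_mem_ball {z : ℂ} (hz : z ∈ ball (0 : ℂ) 1) : (z.re : ℂ) ∈ ball (0 : ℂ) 1 := by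
  rw [mem_ball_zero_iff] at hz ⊢
  exact (norm_ofReal_re_le z).trans_lt hz

lemma rho_re_re_le {z w : ℂ} (hz : z ∈ ball (0 : ℂ) 1) (hw : w ∈ ball (0 : ℂ) 1) :
    rho (z.re : ℂ) (w.re : ℂ) ≤ rho z w :=
  rho_le_rho hz hw (norm_ofReal_re_le z) (norm_ofReal_re_le w)
    (by simpa only [← ofReal_sub, sub_re] using norm_ofReal_re_le (z - w))

lemma rho_re_self_pos {z : ℂ} (hz : z ∈ ball (0 : ℂ) 1) (him : z.im ≠ 0) :
    0 < rho (z.re : ℂ) z :=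
  rho_pos (ofReal_re_mem_ball hz) hz fun h => him (by simpa using congrArg im h.symm)

lemma rho_re_ofReal_self (a : ℝ) : rho (((a : ℂ).re : ℂ)) (a : ℂ) = 0 := by
  rw [ofReal_re, rho_self]

/-- The map `w ↦ Re w` contracts the hyperbolic metric of the disc, fixes all
real points (so perturbs two distinct real points `a, b` not at all), yet moves
every non-real point; hence the two-point inequality
`ρ(f(z),z) ≤ K(ρ(f(a),a)+ρ(f(b),b))` fails for this contraction. -/
theorem re_contraction_counterexample :
    (∀ z ∈ ball (0:ℂ) 1, ∀ w ∈ ball (0:ℂ) 1,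
      rho (z.re : ℂ) (w.re : ℂ) ≤ rho z w) ∧
    (∀ a b : ℝ, (a : ℂ) ∈ ball (0:ℂ) 1 → (b : ℂ) ∈ ball (0:ℂ) 1 → a ≠ b →
      rho (((a : ℂ).re : ℂ)) (a : ℂ) = 0 ∧ rho (((b : ℂ).re : ℂ)) (b : ℂ) = 0) ∧
    (∀ z ∈ ball (0:ℂ) 1, z.im ≠ 0 → 0 < rho (z.re : ℂ) z) ∧
    (∀ a b : ℝ, (a : ℂ) ∈ ball (0:ℂ) 1 → (b : ℂ) ∈ ball (0:ℂ) 1 → a ≠ b →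
      ∃ z ∈ ball (0:ℂ) 1,
        ¬ rho (z.re : ℂ) z ≤
            (Real.exp (rho z a + rho a b + rho b z) / rho (a : ℂ) (b : ℂ)) *
              (rho (((a : ℂ).re : ℂ)) (a : ℂ) + rho (((b : ℂ).re : ℂ)) (b : ℂ))) := by
  refine ⟨fun z hz w hw => rho_re_re_le hz hw,
    fun a b _ _ _ => ⟨rho_re_ofReal_self a, rho_re_ofReal_self b⟩,
    fun z hz him => rho_re_self_pos hz him, fun a b _ _ _ => ?_⟩
  have hz : I / 2 ∈ ball (0 : ℂ) 1 := by
    rw [mem_ball_zero_iff, norm_div, norm_I, RCLike.norm_ofNat]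
    norm_num
  refine ⟨I / 2, hz, ?_⟩
  rw [rho_re_ofReal_self, rho_re_ofReal_self, add_zero, mul_zero, not_le]
  exact rho_re_self_pos hz (by simp)
end
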